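/- arXiv:math/0304383 — 4 statements merged into one kernel-verified Lean document; each statement's English description precedes it below -/
import Mathlib

section
/- There is a constant c > 0 such that the following holds for all r ∈ (0,1], ε ≥ 0, and μ ≥ 0. If f : [−r² − εr, εr] → ℝ is a C² function satisfying ε² f″ − f′ + μ f ≥ 0 and f ≥ 0 on this interval, then f(0) ≤ (c e^{μ r²} / r³) ∫_{−r² − εr}^{εr} f(s) ds. -/
/-!
Write `L = ε² f' - f` and `T = ∫ f`. Since `L' ≥ -μ f` and `f ≥ 0`, `L s ≤ L t + μ T`
whenever `s ≤ t`. The integrating factor `e^{-s/ε²}` turns a one-sided bound on `ε² g' - g`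
into exponential control of `g`. If `L 0 ≥ μ T - f 0 / 2`, then `L ≥ -f 0 / 2` on `[0, εr]`,
so `f` grows at least like `f 0 · s / (2ε²)` there and `T ≥ f 0 · r² / 4`. Otherwise
`L ≤ 2μT - f 0 / 2` on `[-r², 0]`, which keeps `f ≥ f 0 / 2 - 2μT` there, so
`T ≥ r² (f 0 / 2 - 2μT)`. In both cases `f 0 · r² ≤ 4 (1 + μ r²) T ≤ 4 e^{μ r²} T`,
and `r³ ≤ r²`.
-/

open MeasureTheory Set Real intervalIntegral

theorem mul_exp_le_of_mul_le_deriv {h h' : ℝ → ℝ} {κ x y : ℝ} (hxy : x ≤ y)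
    (hc : ContinuousOn h (Icc x y)) (hd : ∀ s ∈ Ioo x y, HasDerivAt h (h' s) s)
    (hle : ∀ s ∈ Ioo x y, κ * h s ≤ h' s) :
    h x * exp (κ * (y - x)) ≤ h y := by
  have hmono : MonotoneOn (fun s => h s * exp (-(κ * s))) (Icc x y) := by
    refine monotoneOn_of_hasDerivWithinAt_nonneg (convex_Icc x y)
      (f' := fun s => exp (-(κ * s)) * (h' s - κ * h s)) (hc.mul (by fun_prop)) ?_ ?_ <;>
      simp only [interior_Icc] <;> intro s hs
    · have hexp : HasDerivAt (fun s => exp (-(κ * s))) (exp (-(κ * s)) * -κ) s := by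
        simpa using ((hasDerivAt_id s).const_mul κ).neg.exp
      exact ((hd s hs).mul hexp).hasDerivWithinAt.congr_deriv (by ring)
    · exact mul_nonneg (exp_pos _).le (sub_nonneg.2 (hle s hs))
  calc h x * exp (κ * (y - x)) = h x * exp (-(κ * x)) * exp (κ * y) := by
        rw [mul_assoc, ← exp_add]; ring_nf
    _ ≤ h y * exp (-(κ * y)) * exp (κ * y) :=
        mul_le_mul_of_nonneg_right (hmono (left_mem_Icc.2 hxy) (right_mem_Icc.2 hxy) hxy)
          (exp_pos _).le
    _ = h y := by rw [mul_assoc, ← exp_add]; simp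

theorem add_mul_div_le_of_le_mul_deriv_sub {g g' : ℝ → ℝ} {c B x y : ℝ} (hc : 0 < c)
    (hxy : x ≤ y) (hgc : ContinuousOn g (Icc x y)) (hd : ∀ s ∈ Ioo x y, HasDerivAt g (g' s) s)
    (hB : ∀ s ∈ Ioo x y, B ≤ c * g' s - g s) (hx : 0 ≤ g x + B) :
    g x + (g x + B) * (y - x) / c ≤ g y := by
  have hgrowth := mul_exp_le_of_mul_le_deriv (h := fun s => g s + B) (κ := c⁻¹) hxy
    (hgc.add continuousOn_const) (fun s hs => (hd s hs).add_const B) fun s hs => by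
      rw [← div_eq_inv_mul, div_le_iff₀ hc]
      linarith [hB s hs]
  have hexp : (g x + B) * (1 + c⁻¹ * (y - x)) ≤ (g x + B) * exp (c⁻¹ * (y - x)) := by
    gcongr
    linarith [add_one_le_exp (c⁻¹ * (y - x))]
  rw [div_eq_mul_inv]
  linarith

theorem min_le_of_mul_deriv_sub_le {g g' : ℝ → ℝ} {c C x y : ℝ} (hc : 0 ≤ c)
    (hxy : x ≤ y) (hgc : ContinuousOn g (Icc x y)) (hd : ∀ s ∈ Ioo x y, HasDerivAt g (g' s) s)
    (hC : ∀ s ∈ Icc x y, c * g' s - g s ≤ C) : min (g y) (-C) ≤ g x := by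
  rcases hc.eq_or_lt with rfl | hc
  · have := hC x (left_mem_Icc.2 hxy)
    exact (min_le_right _ _).trans (by linarith)
  have hgrowth := mul_exp_le_of_mul_le_deriv (h := fun s => -(g s + C)) (κ := c⁻¹) hxy
    (hgc.add continuousOn_const).neg (fun s hs => ((hd s hs).add_const C).neg) fun s hs => by
      rw [mul_neg, neg_le_neg_iff, ← div_eq_inv_mul, le_div_iff₀ hc]
      linarith [hC s (Ioo_subset_Icc_self hs)]
  by_cases hx : 0 ≤ g x + C
  · exact (min_le_right _ _).trans (by linarith)
  · have hexp : (g x + C) * exp (c⁻¹ * (y - x)) ≤ (g x + C) * 1 :=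
      mul_le_mul_of_nonpos_left (one_le_exp (by have := sub_nonneg.2 hxy; positivity))
        (not_le.1 hx).le
    exact (min_le_left _ _).trans (by simp only [neg_mul] at hgrowth; linarith)

theorem integral_mono_interval_of_nonneg {f : ℝ → ℝ} {a b s t : ℝ}
    (hf : ContinuousOn f (Icc a b)) (hf0 : ∀ u ∈ Icc a b, 0 ≤ f u)
    (has : a ≤ s) (hst : s ≤ t) (htb : t ≤ b) :
    ∫ u in s..t, f u ≤ ∫ u in a..b, f u :=
  integral_mono_interval has hst htb
    ((ae_restrict_iff' measurableSet_Ioc).2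
      (ae_of_all _ fun u hu => hf0 u (Ioc_subset_Icc_self hu)))
    (hf.intervalIntegrable_of_Icc (has.trans (hst.trans htb)))

structure IsNonnegSupersolution (c μ a b : ℝ) (f f' f'' : ℝ → ℝ) : Prop where
  continuousOn : ContinuousOn f (Icc a b)
  continuousOn_deriv : ContinuousOn f' (Icc a b)
  hasDerivAt : ∀ s ∈ Ioo a b, HasDerivAt f (f' s) s
  hasDerivAt_deriv : ∀ s ∈ Ioo a b, HasDerivAt f' (f'' s) s
  supersolution : ∀ s ∈ Ioo a b, 0 ≤ c * f'' s - f' s + μ * f s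
  nonneg : ∀ s ∈ Icc a b, 0 ≤ f s

namespace IsNonnegSupersolution

variable {c μ a b : ℝ} {f f' f'' : ℝ → ℝ}

theorem mul_deriv_sub_le_add_mul_integral (hsol : IsNonnegSupersolution c μ a b f f' f'')
    (hμ : 0 ≤ μ) {s t : ℝ} (has : a ≤ s) (hst : s ≤ t) (htb : t ≤ b) :
    c * f' s - f s ≤ c * f' t - f t + μ * ∫ u in a..b, f u := by
  have hsub : Icc s t ⊆ Icc a b := Icc_subset_Icc has htb
  have hsub' : Ioo s t ⊆ Ioo a b := Ioo_subset_Ioo has htb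
  have hFTC := integral_le_sub_of_hasDeriv_right_of_le (g := fun u => c * f' u - f u)
    (φ := fun u => -μ * f u) hst
    ((continuousOn_const.mul hsol.continuousOn_deriv).sub hsol.continuousOn |>.mono hsub)
    (fun u hu => (((hsol.hasDerivAt_deriv u (hsub' hu)).const_mul c).sub
      (hsol.hasDerivAt u (hsub' hu))).hasDerivWithinAt)
    ((hsol.continuousOn.mono hsub).integrableOn_Icc.const_mul (-μ))
    fun u hu => by linarith [hsol.supersolution u (hsub' hu)]
  have hmono := integral_mono_interval_of_nonneg hsol.continuousOn hsol.nonneg has hst htb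
  rw [intervalIntegral.integral_const_mul] at hFTC
  linarith [mul_le_mul_of_nonneg_left hmono hμ]

theorem mul_sq_div_le_integral (hsol : IsNonnegSupersolution c μ a b f f' f'') (hμ : 0 ≤ μ)
    (hc : 0 < c) (ha : a ≤ 0) (hb : 0 ≤ b)
    (hL : μ * (∫ u in a..b, f u) - f 0 / 2 ≤ c * f' 0 - f 0) :
    f 0 * b ^ 2 / (4 * c) ≤ ∫ u in a..b, f u := by
  have hf0 : 0 ≤ f 0 := hsol.nonneg 0 ⟨ha, hb⟩
  have hlower : ∀ y ∈ Icc 0 b, f 0 / (2 * c) * y ≤ f y := by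
    intro y hy
    have hgrowth := add_mul_div_le_of_le_mul_deriv_sub (B := -(f 0 / 2)) hc hy.1
      (hsol.continuousOn.mono (Icc_subset_Icc ha hy.2))
      (fun s hs => hsol.hasDerivAt s (Ioo_subset_Ioo ha hy.2 hs))
      (fun s hs => by
        linarith [hsol.mul_deriv_sub_le_add_mul_integral hμ ha hs.1.le (hs.2.le.trans hy.2)])
      (by linarith)
    calc f 0 / (2 * c) * y = (f 0 + -(f 0 / 2)) * (y - 0) / c := by ring
      _ ≤ f 0 + (f 0 + -(f 0 / 2)) * (y - 0) / c := le_add_of_nonneg_left hf0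
      _ ≤ f y := hgrowth
  calc f 0 * b ^ 2 / (4 * c) = ∫ y in 0..b, f 0 / (2 * c) * y := by
        rw [intervalIntegral.integral_const_mul, integral_id]
        field_simp
        ring
    _ ≤ ∫ y in 0..b, f y :=
        integral_mono_on hb (intervalIntegrable_id.const_mul _)
          ((hsol.continuousOn.mono (Icc_subset_Icc ha le_rfl)).intervalIntegrable_of_Icc hb) hlower
    _ ≤ ∫ u in a..b, f u :=
        integral_mono_interval_of_nonneg hsol.continuousOn hsol.nonneg ha hb le_rfl

theorem neg_mul_le_integral (hsol : IsNonnegSupersolution c μ a b f f' f'') (hμ : 0 ≤ μ)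
    (hc : 0 ≤ c) {x : ℝ} (hax : a ≤ x) (hx : x ≤ 0) (hb : 0 ≤ b)
    (hL : c * f' 0 - f 0 ≤ μ * (∫ u in a..b, f u) - f 0 / 2) :
    -x * (f 0 / 2 - 2 * μ * ∫ u in a..b, f u) ≤ ∫ u in a..b, f u := by
  set T := ∫ u in a..b, f u
  have hf0 : 0 ≤ f 0 := hsol.nonneg 0 ⟨hax.trans hx, hb⟩
  have hμT : 0 ≤ μ * T := mul_nonneg hμ (integral_nonneg (hax.trans (hx.trans hb)) hsol.nonneg)
  have hlower : ∀ s ∈ Icc x 0, f 0 / 2 - 2 * μ * T ≤ f s := by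
    intro s hs
    have hdecay := min_le_of_mul_deriv_sub_le (C := 2 * μ * T - f 0 / 2) hc hs.2
      (hsol.continuousOn.mono (Icc_subset_Icc (hax.trans hs.1) hb))
      (fun u hu => hsol.hasDerivAt u (Ioo_subset_Ioo (hax.trans hs.1) hb hu))
      (fun u hu => by
        linarith [hsol.mul_deriv_sub_le_add_mul_integral hμ (hax.trans (hs.1.trans hu.1)) hu.2 hb])
    rwa [min_eq_right (by linarith), neg_sub] at hdecay
  calc -x * (f 0 / 2 - 2 * μ * T) = ∫ _ in x..0, (f 0 / 2 - 2 * μ * T) := by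
        simp only [intervalIntegral.integral_const, smul_eq_mul]
        ring
    _ ≤ ∫ s in x..0, f s :=
        integral_mono_on hx intervalIntegrable_const
          ((hsol.continuousOn.mono (Icc_subset_Icc hax hb)).intervalIntegrable_of_Icc hx) hlower
    _ ≤ T := integral_mono_interval_of_nonneg hsol.continuousOn hsol.nonneg hax hx hb

end IsNonnegSupersolution

/-- One-dimensional mean value inequality: there is a universal constant `c > 0` such that
for all `r ∈ (0,1]`, `ε ≥ 0`, `μ ≥ 0`, and every `C²` function
`f : [−r² − εr, εr] → ℝ` (with derivatives `f'`, `f''` within the interval) satisfying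
`ε² f'' − f' + μ f ≥ 0` and `f ≥ 0`, one has
`f(0) ≤ (c e^{μ r²} / r³) ∫_{−r²−εr}^{εr} f(s) ds`. -/
theorem statement6 :
    ∃ c : ℝ, 0 < c ∧
      ∀ r ∈ Set.Ioc (0 : ℝ) 1, ∀ ε : ℝ, 0 ≤ ε → ∀ μ : ℝ, 0 ≤ μ →
      ∀ f f' f'' : ℝ → ℝ,
        (∀ s ∈ Set.Icc (-r ^ 2 - ε * r) (ε * r),
          HasDerivWithinAt f (f' s) (Set.Icc (-r ^ 2 - ε * r) (ε * r)) s) →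
        (∀ s ∈ Set.Icc (-r ^ 2 - ε * r) (ε * r),
          HasDerivWithinAt f' (f'' s) (Set.Icc (-r ^ 2 - ε * r) (ε * r)) s) →
        ContinuousOn f (Set.Icc (-r ^ 2 - ε * r) (ε * r)) →
        ContinuousOn f' (Set.Icc (-r ^ 2 - ε * r) (ε * r)) →
        ContinuousOn f'' (Set.Icc (-r ^ 2 - ε * r) (ε * r)) →
        (∀ s ∈ Set.Icc (-r ^ 2 - ε * r) (ε * r),
          ε ^ 2 * f'' s - f' s + μ * f s ≥ 0) →
        (∀ s ∈ Set.Icc (-r ^ 2 - ε * r) (ε * r), 0 ≤ f s) →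
        f 0 ≤ c * Real.exp (μ * r ^ 2) / r ^ 3 *
          ∫ s in Set.Icc (-r ^ 2 - ε * r) (ε * r), f s := by
  refine ⟨4, by norm_num, ?_⟩
  rintro r ⟨hr0, hr1⟩ ε hε μ hμ f f' f'' hdf hdf' hcf hcf' - hsuper hf
  have hr2 : 0 < r ^ 2 := by positivity
  have hb : 0 ≤ ε * r := by positivity
  have ha : -r ^ 2 - ε * r ≤ -r ^ 2 := by linarith
  have hsol : IsNonnegSupersolution (ε ^ 2) μ (-r ^ 2 - ε * r) (ε * r) f f' f'' :=
    { continuousOn := hcf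
      continuousOn_deriv := hcf'
      hasDerivAt := fun s hs =>
        (hdf s (Ioo_subset_Icc_self hs)).hasDerivAt (Icc_mem_nhds hs.1 hs.2)
      hasDerivAt_deriv := fun s hs =>
        (hdf' s (Ioo_subset_Icc_self hs)).hasDerivAt (Icc_mem_nhds hs.1 hs.2)
      supersolution := fun s hs => hsuper s (Ioo_subset_Icc_self hs)
      nonneg := hf }
  rw [integral_Icc_eq_integral_Ioc, ← integral_of_le (by linarith)]
  set T := ∫ s in -r ^ 2 - ε * r..ε * r, f s with hT
  have hf0 : 0 ≤ f 0 := hf 0 ⟨by linarith, hb⟩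
  have hT0 : 0 ≤ T := integral_nonneg (by linarith) hf
  have hμT : 0 ≤ μ * T := mul_nonneg hμ hT0
  have hdecay (hL : ε ^ 2 * f' 0 - f 0 ≤ μ * T - f 0 / 2) :
      f 0 * r ^ 2 ≤ 4 * (1 + μ * r ^ 2) * T := by
    have := hsol.neg_mul_le_integral hμ (sq_nonneg ε) ha (by linarith) hb hL
    rw [← hT] at this
    linarith
  have key : f 0 * r ^ 2 ≤ 4 * (1 + μ * r ^ 2) * T := by
    rcases hε.eq_or_lt with rfl | hε
    · exact hdecay (by rw [zero_pow two_ne_zero, zero_mul]; linarith)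
    rcases le_or_gt (μ * T - f 0 / 2) (ε ^ 2 * f' 0 - f 0) with hL | hL
    · have := hsol.mul_sq_div_le_integral hμ (by positivity) (by linarith) hb hL
      rw [← hT, show f 0 * (ε * r) ^ 2 / (4 * ε ^ 2) = f 0 * r ^ 2 / 4 by field_simp] at this
      linarith [mul_nonneg hμT hr2.le]
    · exact hdecay hL.le
  rw [div_mul_eq_mul_div, le_div_iff₀ (by positivity)]
  calc f 0 * r ^ 3 ≤ f 0 * r ^ 2 :=
        mul_le_mul_of_nonneg_left (pow_le_pow_of_le_one hr0.le hr1 (by norm_num)) hf0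
    _ ≤ 4 * (1 + μ * r ^ 2) * T := key
    _ ≤ 4 * exp (μ * r ^ 2) * T := by
        gcongr
        linarith [add_one_le_exp (μ * r ^ 2)]
end

section
/- Let p > 1 and set κ_p := p if p ≥ 2 and κ_p := p/(p−1) if 1 < p ≤ 2. Then for every positive integer n, every δ > 0, and every smooth 1-periodic function ξ : ℝ → ℝⁿ one has ‖ξ′‖_p ≤ κ_p ( δ^{−1} ‖ξ‖_p + δ ‖ξ″‖_p ). -/
/-! Taylor's formula with integral remainder gives
`δ ξ'(t) = ξ(t + δ) - ξ(t) - ∫₀^δ (δ - s) ξ''(t + s) ds`.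
By periodicity the translate `ξ(· + δ)` has the same `L^p` norm as `ξ`, and the remainder is
bounded pointwise by `δ ∫₀^δ |ξ''(t + s)| ds`, whose `L^p` norm is at most `δ² ‖ξ''‖_p` by Jensen's
inequality on `[t, t + δ]` and Fubini. Hence `‖ξ'‖_p ≤ 2 δ⁻¹ ‖ξ‖_p + δ ‖ξ''‖_p`, and `κ_p ≥ 2`. -/

open MeasureTheory

/-- The `L^p` norm of a loop, `‖f‖_p = (∫₀¹ |f(t)|^p dt)^{1/p}`. -/
noncomputable def loopNorm (p : ℝ) {n : ℕ} (f : ℝ → EuclideanSpace ℝ (Fin n)) : ℝ :=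
  (∫ t in Set.Ioc (0 : ℝ) 1, ‖f t‖ ^ p) ^ (1 / p)

/-- The constant `κ_p`: `κ_p = p` for `p ≥ 2` and `κ_p = p/(p−1)` for `1 < p ≤ 2`. -/
noncomputable def kappa (p : ℝ) : ℝ := if 2 ≤ p then p else p / (p - 1)

open Set Function intervalIntegral

variable {E : Type*} [NormedAddCommGroup E]

theorem Continuous.memLp_restrict_Ioc {f : ℝ → E} (hf : Continuous f) (q : ENNReal) (a b : ℝ) :
    MemLp f q (volume.restrict (Ioc a b)) := by
  obtain ⟨M, hM⟩ := (isCompact_Icc (a := a) (b := b)).exists_bound_of_continuousOn hf.continuousOn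
  refine MemLp.of_bound hf.aestronglyMeasurable M ?_
  filter_upwards [ae_restrict_mem measurableSet_Ioc] with x hx
  exact hM x (Ioc_subset_Icc_self hx)

variable [NormedSpace ℝ E]

theorem Function.Periodic.deriv {f : ℝ → E} {c : ℝ} (hf : Periodic f c) :
    Periodic (_root_.deriv f) c := by
  intro x
  rw [← deriv_comp_add_const, show (fun y => f (y + c)) = f from funext hf]

theorem Function.Periodic.setIntegral_Ioc_comp_add {G : ℝ → E} {T : ℝ} (hG : Periodic G T)
    (hT : 0 ≤ T) (u : ℝ) : ∫ t in Ioc 0 T, G (t + u) = ∫ t in Ioc 0 T, G t := by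
  rw [← integral_of_le hT, ← integral_of_le hT, integral_comp_add_right, zero_add, add_comm,
    hG.intervalIntegral_add_eq u 0, zero_add]

theorem Function.Periodic.setIntegral_Ioc_intervalIntegral_comp_add [CompleteSpace E]
    {G : ℝ → E} {T δ : ℝ} (hG : Continuous G) (hGp : Periodic G T) (hT : 0 ≤ T) (hδ : 0 ≤ δ) :
    ∫ t in Ioc 0 T, ∫ s in 0..δ, G (t + s) = δ • ∫ t in Ioc 0 T, G t := by
  have hint : Integrable (uncurry fun t s => G (t + s))
      ((volume.restrict (Ioc 0 T)).prod (volume.restrict (Ioc 0 δ))) := by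
    rw [Measure.prod_restrict, ← Measure.volume_eq_prod]
    exact ((hG.comp continuous_add).continuousOn.integrableOn_compact
      (isCompact_Icc.prod isCompact_Icc)).mono_set
      (prod_mono Ioc_subset_Icc_self Ioc_subset_Icc_self)
  simp_rw [integral_of_le hδ]
  rw [integral_integral_swap hint]
  simp_rw [hGp.setIntegral_Ioc_comp_add hT]
  rw [setIntegral_const, Real.volume_real_Ioc_of_le hδ, sub_zero]

theorem rpow_intervalIntegral_le {g : ℝ → ℝ} {a b p : ℝ} (hp : 1 ≤ p) (hab : a ≤ b)
    (hg : Continuous g) (hg0 : ∀ x, 0 ≤ g x) :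
    (∫ x in a..b, g x) ^ p ≤ (b - a) ^ (p - 1) * ∫ x in a..b, g x ^ p := by
  rcases hab.eq_or_lt with rfl | hab
  · simp [Real.zero_rpow (by linarith : p ≠ 0)]
  have hvol : volume (Ioc a b) = ENNReal.ofReal (b - a) := Real.volume_Ioc
  have jensen := (convexOn_rpow hp).map_set_average_le (μ := volume) (t := Ioc a b) (f := g)
    (Real.continuous_rpow_const (by linarith)).continuousOn isClosed_Ici
    (by simp [hvol, hab]) (by simp [hvol]) (ae_of_all _ fun x => hg0 x)
    hg.integrableOn_Ioc ((hg.rpow_const fun _ => Or.inr (by linarith)).integrableOn_Ioc)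
  simp only [setAverage_eq, smul_eq_mul, Real.volume_real_Ioc_of_le hab.le] at jensen
  rw [integral_of_le hab.le, integral_of_le hab.le]
  have hba : 0 < b - a := sub_pos.mpr hab
  rw [Real.mul_rpow (by positivity) (setIntegral_nonneg measurableSet_Ioc fun x _ => hg0 x),
    Real.inv_rpow hba.le] at jensen
  calc _ = (b - a) ^ p * (((b - a) ^ p)⁻¹ * (∫ x in Ioc a b, g x) ^ p) := by
        field_simp
    _ ≤ (b - a) ^ p * ((b - a)⁻¹ * ∫ x in Ioc a b, g x ^ p) := by gcongr
    _ = _ := by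
        rw [Real.rpow_sub_one hba.ne']; field_simp

theorem norm_intervalIntegral_sub_smul_le {h : ℝ → E} {δ : ℝ} (hδ : 0 ≤ δ) (hh : Continuous h) :
    ‖∫ s in 0..δ, (δ - s) • h s‖ ≤ δ * ∫ s in 0..δ, ‖h s‖ := by
  rw [← intervalIntegral.integral_const_mul]
  refine norm_integral_le_of_norm_le hδ (ae_of_all _ fun s hs => ?_)
    ((hh.norm.const_mul δ).intervalIntegrable _ _)
  rw [norm_smul, Real.norm_of_nonneg (by linarith [hs.2])]
  exact mul_le_mul_of_nonneg_right (by linarith [hs.1]) (norm_nonneg _)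

theorem taylor_integral_remainder_one [CompleteSpace E] {f : ℝ → E} (hf : ContDiff ℝ 2 f)
    (t δ : ℝ) :
    f (t + δ) - f t - δ • deriv f t = ∫ s in 0..δ, (δ - s) • deriv (deriv f) (t + s) := by
  have hf' : Differentiable ℝ f := hf.differentiable (by norm_num)
  have hf'' : Differentiable ℝ (deriv f) := hf.differentiable_deriv_two
  have hF : ∀ s, HasDerivAt (fun s => f (t + s) + (δ - s) • deriv f (t + s))
      ((δ - s) • deriv (deriv f) (t + s)) s := by
    intro s
    have h1 := (hf' (t + s)).hasDerivAt.comp_const_add t s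
    have h2 := ((hasDerivAt_id s).const_sub δ).fun_smul
      ((hf'' (t + s)).hasDerivAt.comp_const_add t s)
    refine (h1.fun_add h2).congr_deriv ?_
    simp only [id, neg_one_smul]
    abel
  rw [integral_eq_sub_of_hasDerivAt (fun s _ => hF s)]
  · simp [sub_sub]
  · have hf''c : Continuous (deriv (deriv f)) := (hf.deriv' (n := 1)).continuous_deriv_one
    exact ((continuous_const.sub continuous_id).smul
      (hf''c.comp (continuous_const_add t))).intervalIntegrable _ _

section loopNorm

variable {n : ℕ} {p : ℝ} {f g : ℝ → EuclideanSpace ℝ (Fin n)}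

theorem loopNorm_nonneg (p : ℝ) (f : ℝ → EuclideanSpace ℝ (Fin n)) : 0 ≤ loopNorm p f :=
  Real.rpow_nonneg (setIntegral_nonneg measurableSet_Ioc fun _ _ => by positivity) _

theorem loopNorm_eq_toReal_eLpNorm (hp : 0 < p)
    (hf : AEStronglyMeasurable f (volume.restrict (Ioc 0 1))) :
    loopNorm p f = (eLpNorm f (ENNReal.ofReal p) (volume.restrict (Ioc 0 1))).toReal := by
  rw [eLpNorm_eq_lintegral_rpow_enorm_toReal (by simp [hp]) ENNReal.ofReal_ne_top,
    ENNReal.toReal_ofReal hp.le, loopNorm, integral_eq_lintegral_of_nonneg_ae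
    (ae_of_all _ fun t => by positivity) (hf.norm.aemeasurable.pow_const p).aestronglyMeasurable,
    ← ENNReal.toReal_rpow]
  congr 2
  refine lintegral_congr fun t => ?_
  rw [← ENNReal.ofReal_rpow_of_nonneg (norm_nonneg _) hp.le, ofReal_norm]

theorem loopNorm_sub_le (hp : 1 ≤ p) (hf : Continuous f) (hg : Continuous g) :
    loopNorm p (f - g) ≤ loopNorm p f + loopNorm p g := by
  have hp0 : 0 < p := by linarith
  have hP : 1 ≤ ENNReal.ofReal p := by simpa using ENNReal.ofReal_le_ofReal hp
  have hfL := (hf.memLp_restrict_Ioc (ENNReal.ofReal p) 0 1).eLpNorm_ne_top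
  have hgL := (hg.memLp_restrict_Ioc (ENNReal.ofReal p) 0 1).eLpNorm_ne_top
  rw [loopNorm_eq_toReal_eLpNorm hp0 (hf.sub hg).aestronglyMeasurable,
    loopNorm_eq_toReal_eLpNorm hp0 hf.aestronglyMeasurable,
    loopNorm_eq_toReal_eLpNorm hp0 hg.aestronglyMeasurable, ← ENNReal.toReal_add hfL hgL]
  exact ENNReal.toReal_mono (ENNReal.add_ne_top.mpr ⟨hfL, hgL⟩)
    (eLpNorm_sub_le hf.aestronglyMeasurable hg.aestronglyMeasurable hP)

theorem loopNorm_const_smul (hp : 0 < p) (c : ℝ) (f : ℝ → EuclideanSpace ℝ (Fin n)) :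
    loopNorm p (c • f) = |c| * loopNorm p f := by
  simp only [loopNorm, Pi.smul_apply, norm_smul, Real.norm_eq_abs]
  simp_rw [Real.mul_rpow (abs_nonneg c) (norm_nonneg _)]
  rw [MeasureTheory.integral_const_mul, Real.mul_rpow (by positivity)
    (setIntegral_nonneg measurableSet_Ioc fun _ _ => by positivity), ← Real.rpow_mul (abs_nonneg c),
    mul_one_div_cancel hp.ne', Real.rpow_one]

theorem Function.Periodic.loopNorm_comp_add (hf : Periodic f 1) (a : ℝ) :
    loopNorm p (fun t => f (t + a)) = loopNorm p f := by
  have hGp : Periodic (fun t => ‖f t‖ ^ p) 1 := fun t => by simp [hf t]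
  rw [loopNorm, hGp.setIntegral_Ioc_comp_add zero_le_one a, loopNorm]

theorem Function.Periodic.loopNorm_comp_add_sub_le (hf : Periodic f 1) (hp : 1 ≤ p)
    (hfc : Continuous f) (a : ℝ) : loopNorm p ((fun t => f (t + a)) - f) ≤ 2 * loopNorm p f := by
  have hsub := loopNorm_sub_le hp (hfc.comp (continuous_add_const a)) hfc
  rwa [comp_def, hf.loopNorm_comp_add, ← two_mul] at hsub

theorem loopNorm_le_of_norm_le_intervalIntegral {h : ℝ → EuclideanSpace ℝ (Fin n)} {δ : ℝ}
    (hp : 1 ≤ p) (hδ : 0 ≤ δ) (hh : Continuous h) (hhp : Periodic h 1)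
    (hfh : ∀ t, ‖f t‖ ≤ ∫ s in 0..δ, ‖h (t + s)‖) :
    loopNorm p f ≤ δ * loopNorm p h := by
  have hp0 : 0 < p := by linarith
  have hG : Continuous fun t => ‖h t‖ ^ p := hh.norm.rpow_const fun _ => Or.inr hp0.le
  have hpt : ∀ t, ‖f t‖ ^ p ≤ δ ^ (p - 1) * ∫ s in 0..δ, ‖h (t + s)‖ ^ p := fun t =>
    calc ‖f t‖ ^ p ≤ (∫ s in 0..δ, ‖h (t + s)‖) ^ p := by gcongr; exact hfh t
      _ ≤ _ := by
        simpa using rpow_intervalIntegral_le hp hδ (hh.comp (continuous_const_add t)).norm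
          fun _ => norm_nonneg _
  have hint : ∫ t in Ioc 0 1, ‖f t‖ ^ p ≤ δ ^ p * ∫ t in Ioc 0 1, ‖h t‖ ^ p :=
    calc ∫ t in Ioc 0 1, ‖f t‖ ^ p
        ≤ ∫ t in Ioc 0 1, δ ^ (p - 1) * ∫ s in 0..δ, ‖h (t + s)‖ ^ p := by
          refine integral_mono_of_nonneg (ae_of_all _ fun t => by positivity) ?_
            (ae_of_all _ hpt)
          exact (continuous_const.mul (continuous_parametric_intervalIntegral_of_continuous'
            (f := fun t s => ‖h (t + s)‖ ^ p) (hG.comp continuous_add) 0 δ)).integrableOn_Ioc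
      _ = δ ^ p * ∫ t in Ioc 0 1, ‖h t‖ ^ p := by
        have hGp : Periodic (fun t => ‖h t‖ ^ p) 1 := fun t => by simp [hhp t]
        rw [MeasureTheory.integral_const_mul,
          hGp.setIntegral_Ioc_intervalIntegral_comp_add hG zero_le_one hδ, smul_eq_mul,
          ← mul_assoc, ← Real.rpow_add_one' hδ (by linarith), sub_add_cancel]
  calc loopNorm p f ≤ (δ ^ p * ∫ t in Ioc 0 1, ‖h t‖ ^ p) ^ (1 / p) :=
        Real.rpow_le_rpow (setIntegral_nonneg measurableSet_Ioc fun _ _ => by positivity) hint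
          (by positivity)
    _ = δ * loopNorm p h := by
        rw [Real.mul_rpow (by positivity)
          (setIntegral_nonneg measurableSet_Ioc fun _ _ => by positivity), ← Real.rpow_mul hδ,
          mul_one_div_cancel hp0.ne', Real.rpow_one, loopNorm]

end loopNorm

theorem two_le_kappa {p : ℝ} (hp : 1 < p) : 2 ≤ kappa p := by
  unfold kappa
  split_ifs with h
  · exact h
  · rw [le_div_iff₀ (by linarith)]
    linarith

theorem statement11_general (p : ℝ) (hp : 1 < p) (n : ℕ) (δ : ℝ) (hδ : 0 < δ)
    (ξ : ℝ → EuclideanSpace ℝ (Fin n))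
    (hξ : ContDiff ℝ (⊤ : ℕ∞) ξ) (hpξ : Function.Periodic ξ 1) :
    loopNorm p (deriv ξ) ≤
      kappa p * (δ⁻¹ * loopNorm p ξ + δ * loopNorm p (deriv (deriv ξ))) := by
  have hξ2 : ContDiff ℝ 2 ξ := hξ.of_le (by norm_cast)
  have hξ'' : Continuous (deriv (deriv ξ)) := (hξ2.deriv' (n := 1)).continuous_deriv_one
  set R := fun t => ∫ s in 0..δ, (δ - s) • deriv (deriv ξ) (t + s)
  have hrepr : deriv ξ = δ⁻¹ • ((fun t => ξ (t + δ)) - ξ) - δ⁻¹ • R := by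
    funext t
    simp only [Pi.sub_apply, Pi.smul_apply, R, ← taylor_integral_remainder_one hξ2 t δ,
      smul_sub, smul_smul, inv_mul_cancel₀ hδ.ne', one_smul]
    abel
  have hR : Continuous R := by fun_prop
  have hdiff : loopNorm p (δ⁻¹ • ((fun t => ξ (t + δ)) - ξ)) ≤ 2 * (δ⁻¹ * loopNorm p ξ) := by
    rw [loopNorm_const_smul (by linarith), abs_of_pos (inv_pos.mpr hδ), mul_left_comm]
    exact mul_le_mul_of_nonneg_left (hpξ.loopNorm_comp_add_sub_le hp.le hξ2.continuous δ)
      (by positivity)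
  have hrem : loopNorm p (δ⁻¹ • R) ≤ δ * loopNorm p (deriv (deriv ξ)) := by
    refine loopNorm_le_of_norm_le_intervalIntegral hp.le hδ.le hξ'' hpξ.deriv.deriv fun t => ?_
    rw [Pi.smul_apply, norm_smul, Real.norm_of_nonneg (inv_nonneg.mpr hδ.le), inv_mul_le_iff₀ hδ]
    exact norm_intervalIntegral_sub_smul_le hδ.le (hξ''.comp (continuous_const_add t))
  calc loopNorm p (deriv ξ)
      ≤ loopNorm p (δ⁻¹ • ((fun t => ξ (t + δ)) - ξ)) + loopNorm p (δ⁻¹ • R) := by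
        rw [hrepr]
        exact loopNorm_sub_le hp.le (by fun_prop) (by fun_prop)
    _ ≤ 2 * (δ⁻¹ * loopNorm p ξ) + δ * loopNorm p (deriv (deriv ξ)) := add_le_add hdiff hrem
    _ ≤ kappa p * (δ⁻¹ * loopNorm p ξ + δ * loopNorm p (deriv (deriv ξ))) := by
        have hξ_nonneg : 0 ≤ δ⁻¹ * loopNorm p ξ := by have := loopNorm_nonneg p ξ; positivity
        have hξ''_nonneg : 0 ≤ δ * loopNorm p (deriv (deriv ξ)) := by
          have := loopNorm_nonneg p (deriv (deriv ξ)); positivity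
        nlinarith [two_le_kappa hp]

/-- Interpolation estimate for the first derivative of a smooth `1`-periodic loop:
`‖ξ'‖_p ≤ κ_p (δ⁻¹ ‖ξ‖_p + δ ‖ξ''‖_p)` for every `δ > 0`. -/
theorem statement11 (p : ℝ) (hp : 1 < p) (n : ℕ) (hn : 0 < n) (δ : ℝ) (hδ : 0 < δ)
    (ξ : ℝ → EuclideanSpace ℝ (Fin n))
    (hξ : ContDiff ℝ (⊤ : ℕ∞) ξ) (hpξ : Function.Periodic ξ 1) :
    loopNorm p (deriv ξ) ≤
      kappa p * (δ⁻¹ * loopNorm p ξ + δ * loopNorm p (deriv (deriv ξ))) :=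
  statement11_general p hp n δ hδ ξ hξ hpξ
end

section
/- For every real number p > 2 and every positive integer n there is a constant c > 0 such that the following holds for every ε ∈ (0,1] and every pair of nonnegative real numbers β₁ and β₂. If ξ : ℝ² → ℝⁿ is a C¹ function that is 1-periodic in the second variable t and vanishes outside a set of the form [−T,T] × ℝ, then sup_{(s,t) ∈ ℝ²} |ξ(s,t)| ≤ c ε^{−(β₁+β₂)/p} ( ‖ξ‖_p + ε^{β₁} ‖∂_t ξ‖_p + ε^{β₂} ‖∂_s ξ‖_p ). -/
/-!
Fix a point `q` and the rectangle `R = q + (0, a] × (0, b]` with `a = ε^β₂`, `b = ε^β₁`. For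
`x ∈ R` the fundamental theorem of calculus along the segment from `q` to `x` gives
`|ξ q| ≤ |ξ x| + ∫₀¹ (a |∂ₛξ| + b |∂ₜξ|)(q + r (x - q)) dr`. Averaging over `R` and applying
Hölder's inequality on `R` bounds `|R| |ξ q|` by `|R|^{1 - 1/p}` times the `L^p` norms, except
that the derivatives are evaluated on the rectangle shrunk by the factor `r`; undoing the
homothety costs `r^{-2/p}`, which is integrable on `(0, 1]` exactly because `p > 2`. Since
`b ≤ 1`, every shrunk rectangle lies in a strip of height one, whose `L^p` norm is the
cylinder norm by periodicity.
-/

open MeasureTheory Set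

/-- The `L^p` norm on the cylinder `ℝ × S¹`,
`‖f‖_p = (∫_ℝ ∫₀¹ |f(s,t)|^p dt ds)^{1/p}`, for functions on `ℝ²` that are
`1`-periodic in the second variable. -/
noncomputable def cylNorm (p : ℝ) {n : ℕ} (f : ℝ × ℝ → EuclideanSpace ℝ (Fin n)) : ℝ :=
  (∫ q in (Set.univ ×ˢ Set.Ioc (0 : ℝ) 1 : Set (ℝ × ℝ)), ‖f q‖ ^ p) ^ (1 / p)

variable {E F : Type*} [NormedAddCommGroup E] [NormedAddCommGroup F]

theorem integral_le_measureReal_rpow_mul_integral_rpow {α : Type*} [MeasurableSpace α]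
    {μ : Measure α} [IsFiniteMeasure μ] {p : ℝ} (hp : 1 < p) {f : α → ℝ} (hf₀ : ∀ x, 0 ≤ f x)
    (hf : MemLp f (ENNReal.ofReal p) μ) :
    ∫ x, f x ∂μ ≤ μ.real univ ^ (1 - 1 / p) * (∫ x, f x ^ p ∂μ) ^ (1 / p) := by
  have h := integral_mul_le_Lp_mul_Lq_of_nonneg (Real.HolderConjugate.conjExponent hp)
    (.of_forall hf₀) (.of_forall fun _ => zero_le_one) hf (memLp_const (1 : ℝ))
  have hq : 1 / p.conjExponent = 1 - 1 / p := by
    rw [Real.conjExponent, one_div_div]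
    field_simp
  simpa [integral_const, hq, mul_comm] using h

theorem Continuous.memLp_restrict_of_subset_isCompact {X : Type*} [TopologicalSpace X]
    [T2Space X] [MeasurableSpace X] [OpensMeasurableSpace X] {μ : Measure X}
    [IsFiniteMeasureOnCompacts μ] {f : X → F} (hf : Continuous f) {K s : Set X}
    (hK : IsCompact K) (hsK : s ⊆ K) (p : ENNReal) : MemLp f p (μ.restrict s) := by
  have : IsFiniteMeasure (μ.restrict K) := isFiniteMeasure_restrict.2 hK.measure_lt_top.ne
  obtain ⟨C, hC⟩ := hK.exists_bound_of_continuousOn hf.continuousOn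
  refine (MemLp.of_bound (hf.continuousOn.aestronglyMeasurable_of_isCompact hK hK.measurableSet)
    C ?_).mono_measure (Measure.restrict_mono hsK le_rfl)
  filter_upwards [ae_restrict_mem hK.measurableSet] using hC

theorem setIntegral_comp_homothety [NormedSpace ℝ E] [NormedSpace ℝ F] [FiniteDimensional ℝ E]
    [MeasurableSpace E] [BorelSpace E] (μ : Measure E) [μ.IsAddHaarMeasure] (g : E → F)
    {s : Set E} (hs : MeasurableSet s) (c : E) {r : ℝ} (hr : 0 < r) :
    ∫ x in s, g (AffineMap.homothety c r x) ∂μ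
      = (r ^ Module.finrank ℝ E)⁻¹ • ∫ x in AffineMap.homothety c r '' s, g x ∂μ := by
  have hderiv : ∀ x ∈ s, HasFDerivWithinAt (AffineMap.homothety c r)
      (r • ContinuousLinearMap.id ℝ E) s x := fun x _ =>
    (((hasFDerivAt_id x).sub_const c).const_smul r).add_const c |>.hasFDerivWithinAt
  rw [integral_image_eq_integral_abs_det_fderiv_smul μ hs hderiv
    (AffineMap.homothety_injective c hr.ne').injOn, integral_smul]
  simp [ContinuousLinearMap.det, abs_of_pos hr, hr.ne']

theorem norm_le_norm_add_integral_norm_fderiv [NormedSpace ℝ E] [NormedSpace ℝ F]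
    [CompleteSpace F] {ξ : E → F} (hξ : ContDiff ℝ 1 ξ) (q x : E) :
    ‖ξ q‖ ≤ ‖ξ x‖ + ∫ r in (0 : ℝ)..1, ‖fderiv ℝ ξ (AffineMap.lineMap q x r) (x - q)‖ := by
  have hderiv (r : ℝ) : HasDerivAt (fun r : ℝ => ξ (AffineMap.lineMap q x r))
      (fderiv ℝ ξ (AffineMap.lineMap q x r) (x - q)) r :=
    (hξ.differentiable one_ne_zero _).hasFDerivAt.comp_hasDerivAt r AffineMap.hasDerivAt_lineMap
  have hcont : Continuous fun r : ℝ => fderiv ℝ ξ (AffineMap.lineMap q x r) (x - q) :=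
    ((hξ.continuous_fderiv one_ne_zero).comp AffineMap.lineMap_continuous).clm_apply
      continuous_const
  have hftc : ∫ r in (0 : ℝ)..1, fderiv ℝ ξ (AffineMap.lineMap q x r) (x - q) = ξ x - ξ q := by
    rw [intervalIntegral.integral_eq_sub_of_hasDerivAt (fun r _ => hderiv r)
      (hcont.intervalIntegrable 0 1)]
    simp
  calc ‖ξ q‖ = ‖ξ x - ∫ r in (0 : ℝ)..1, fderiv ℝ ξ (AffineMap.lineMap q x r) (x - q)‖ := by
        rw [hftc, sub_sub_cancel]
    _ ≤ _ := (norm_sub_le _ _).trans <| add_le_add_right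
        (intervalIntegral.norm_integral_le_integral_norm zero_le_one) _

theorem Function.Periodic.fderiv [NormedSpace ℝ E] [NormedSpace ℝ F] {ξ : E → F} {v : E}
    (hξ : Function.Periodic ξ v) : Function.Periodic (fderiv ℝ ξ) v := fun x => by
  rw [← fderiv_comp_add_right, funext hξ]

theorem fderiv_eq_zero_of_eqOn_zero [NormedSpace ℝ E] [NormedSpace ℝ F] {ξ : E → F} {U : Set E}
    (hU : IsOpen U) (hξ : EqOn ξ 0 U) {x : E} (hx : x ∈ U) : fderiv ℝ ξ x = 0 := by
  rw [(Filter.eventuallyEq_of_mem (hU.mem_nhds hx) hξ).fderiv_eq]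
  exact fderiv_const_apply 0

theorem ContinuousLinearMap.norm_apply_le_of_abs_le [NormedSpace ℝ F] (L : ℝ × ℝ →L[ℝ] F)
    {v : ℝ × ℝ} {a b : ℝ} (ha : |v.1| ≤ a) (hb : |v.2| ≤ b) :
    ‖L v‖ ≤ a * ‖L (1, 0)‖ + b * ‖L (0, 1)‖ := by
  have hv : v = v.1 • ((1 : ℝ), (0 : ℝ)) + v.2 • ((0 : ℝ), (1 : ℝ)) := by ext <;> simp
  rw [hv, map_add, map_smul, map_smul]
  refine (norm_add_le _ _).trans ?_
  rw [norm_smul, norm_smul, Real.norm_eq_abs, Real.norm_eq_abs]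
  gcongr

theorem Continuous.integrableOn_Ioc_prod_Ioc {f : ℝ × ℝ → F} (hf : Continuous f) (a b c d : ℝ) :
    IntegrableOn f (Ioc a b ×ˢ Ioc c d) :=
  (hf.continuousOn.integrableOn_compact (isCompact_Icc.prod isCompact_Icc)).mono_set
    (prod_mono Ioc_subset_Icc_self Ioc_subset_Icc_self)

theorem Continuous.integrableOn_univ_prod_Ioc {f : ℝ × ℝ → F} (hf : Continuous f) {T : ℝ}
    (hT : ∀ x : ℝ × ℝ, T < |x.1| → f x = 0) (c d : ℝ) :
    IntegrableOn f (univ ×ˢ Ioc c d) := by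
  have hK : IntegrableOn f (Icc (-T) T ×ˢ Icc c d) :=
    hf.continuousOn.integrableOn_compact (isCompact_Icc.prod isCompact_Icc)
  refine hK.of_forall_sdiff_eq_zero (MeasurableSet.univ.prod measurableSet_Ioc)
    fun x hx => hT x ?_
  by_contra! hle
  exact hx.2 ⟨abs_le.1 hle, Ioc_subset_Icc_self hx.1.2⟩

theorem setIntegral_univ_prod_Ioc_add_one [NormedSpace ℝ F] {f : ℝ × ℝ → F} (hf : Continuous f)
    {T : ℝ} (hT : ∀ x : ℝ × ℝ, T < |x.1| → f x = 0) (hper : ∀ s t, f (s, t + 1) = f (s, t))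
    (c : ℝ) : ∫ x in univ ×ˢ Ioc c (c + 1), f x = ∫ x in univ ×ˢ Ioc (0 : ℝ) 1, f x := by
  have hint (c d : ℝ) : IntegrableOn f (univ ×ˢ Ioc c d) (volume.prod volume) := by
    simpa [← Measure.volume_eq_prod] using hf.integrableOn_univ_prod_Ioc hT c d
  rw [Measure.volume_eq_prod, setIntegral_prod _ (hint _ _), setIntegral_prod _ (hint _ _)]
  congr 1 with s
  rw [← intervalIntegral.integral_of_le (by linarith),
    ← intervalIntegral.integral_of_le zero_le_one]
  simpa using (show Function.Periodic (fun t => f (s, t)) 1 from hper s).intervalIntegral_add_eq c 0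

theorem setIntegral_norm_comp_homothety_le {f : ℝ × ℝ → F} (hf : Continuous f) {T : ℝ}
    (hT : ∀ x : ℝ × ℝ, T < |x.1| → f x = 0) (hper : ∀ s t, f (s, t + 1) = f (s, t))
    {p : ℝ} (hp : 1 < p) (q : ℝ × ℝ) {a b : ℝ} (ha : 0 ≤ a) (hb₀ : 0 ≤ b) (hb₁ : b ≤ 1)
    {r : ℝ} (hr₀ : 0 < r) (hr₁ : r ≤ 1) :
    ∫ x in Ioc q.1 (q.1 + a) ×ˢ Ioc q.2 (q.2 + b), ‖f (AffineMap.homothety q r x)‖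
      ≤ (a * b) ^ (1 - 1 / p) * r ^ (-(2 / p))
        * (∫ x in univ ×ˢ Ioc (0 : ℝ) 1, ‖f x‖ ^ p) ^ (1 / p) := by
  set R := Ioc q.1 (q.1 + a) ×ˢ Ioc q.2 (q.2 + b)
  set Φ := AffineMap.homothety q r
  set I := ∫ x in univ ×ˢ Ioc (0 : ℝ) 1, ‖f x‖ ^ p
  have hp₀ : 0 < p := by linarith
  have hR : MeasurableSet R := measurableSet_Ioc.prod measurableSet_Ioc
  have hRvol : volume.real R = a * b := by
    simp [R, Measure.volume_eq_prod, measureReal_prod_prod, ha, hb₀]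
  have : IsFiniteMeasure (volume.restrict R) := isFiniteMeasure_restrict.2 <| by
    simp [R, Measure.volume_eq_prod, Measure.prod_prod, ENNReal.mul_eq_top]
  have hfp : Continuous fun x => ‖f x‖ ^ p := hf.norm.rpow_const fun _ => Or.inr hp₀.le
  have hfpT (x : ℝ × ℝ) (hx : T < |x.1|) : ‖f x‖ ^ p = 0 := by simp [hT x hx, hp₀.ne']
  have hΦR : Φ '' R ⊆ univ ×ˢ Ioc q.2 (q.2 + 1) := by
    rintro _ ⟨x, ⟨-, hx₁, hx₂⟩, rfl⟩
    simp only [Φ, AffineMap.homothety_apply, vsub_eq_sub, vadd_eq_add, mem_prod, mem_univ,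
      Prod.snd_add, Prod.smul_snd, Prod.snd_sub, smul_eq_mul, mem_Ioc, true_and]
    constructor <;> nlinarith
  have hstrip : ∫ x in univ ×ˢ Ioc q.2 (q.2 + 1), ‖f x‖ ^ p = I :=
    setIntegral_univ_prod_Ioc_add_one hfp hfpT (fun s t => by simp [hper]) q.2
  have hrescale : ∫ x in R, ‖f (Φ x)‖ ^ p ≤ (r ^ 2)⁻¹ * I := by
    rw [setIntegral_comp_homothety volume (fun y => ‖f y‖ ^ p) hR q hr₀, Module.finrank_prod,
      Module.finrank_self, one_add_one_eq_two, smul_eq_mul, ← hstrip]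
    refine mul_le_mul_of_nonneg_left ?_ (by positivity)
    exact setIntegral_mono_set (hfp.integrableOn_univ_prod_Ioc hfpT _ _)
      (.of_forall fun _ => by positivity) hΦR.eventuallyLE
  have hholder := integral_le_measureReal_rpow_mul_integral_rpow (μ := volume.restrict R) hp
    (fun x => norm_nonneg (f (Φ x)))
    ((hf.comp (AffineMap.homothety_continuous q r)).norm.memLp_restrict_of_subset_isCompact
      (isCompact_Icc.prod isCompact_Icc) (prod_mono Ioc_subset_Icc_self Ioc_subset_Icc_self) _)
  rw [measureReal_restrict_apply_univ, hRvol] at hholder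
  have hI : 0 ≤ I := setIntegral_nonneg (MeasurableSet.univ.prod measurableSet_Ioc)
    fun _ _ => by positivity
  calc _ ≤ _ := hholder
    _ ≤ (a * b) ^ (1 - 1 / p) * ((r ^ 2)⁻¹ * I) ^ (1 / p) := by gcongr
    _ = _ := by
      rw [Real.mul_rpow (by positivity) hI, ← Real.rpow_natCast, ← Real.rpow_neg hr₀.le,
        ← Real.rpow_mul hr₀.le, mul_assoc]
      congr 3
      push_cast
      ring

section Rectangle

variable [NormedSpace ℝ F] [CompleteSpace F] {ξ : ℝ × ℝ → F}

theorem norm_le_norm_add_integral_partialDeriv (hξ : ContDiff ℝ 1 ξ) {q x : ℝ × ℝ} {a b : ℝ}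
    (hx : x ∈ Ioc q.1 (q.1 + a) ×ˢ Ioc q.2 (q.2 + b)) :
    ‖ξ q‖ ≤ ‖ξ x‖ + ∫ r in Ioc (0 : ℝ) 1,
      (a * ‖fderiv ℝ ξ (AffineMap.homothety q r x) (1, 0)‖
        + b * ‖fderiv ℝ ξ (AffineMap.homothety q r x) (0, 1)‖) := by
  obtain ⟨⟨hx₁, hx₁'⟩, ⟨hx₂, hx₂'⟩⟩ := hx
  have hline : Continuous fun r : ℝ => fderiv ℝ ξ (AffineMap.lineMap q x r) :=
    (hξ.continuous_fderiv one_ne_zero).comp AffineMap.lineMap_continuous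
  refine (norm_le_norm_add_integral_norm_fderiv hξ q x).trans (add_le_add_right ?_ _)
  rw [intervalIntegral.integral_of_le zero_le_one]
  refine setIntegral_mono ((hline.clm_apply continuous_const).norm.integrableOn_Ioc (μ := volume))
    ((((hline.clm_apply continuous_const).norm.const_mul a).add
      ((hline.clm_apply continuous_const).norm.const_mul b)).integrableOn_Ioc (μ := volume))
    fun r => ?_
  refine ContinuousLinearMap.norm_apply_le_of_abs_le _ ?_ ?_ <;>
    simp only [Prod.fst_sub, Prod.snd_sub, abs_le] <;> constructor <;> linarith

theorem mul_norm_le_setIntegral_add_integral_setIntegral (hξ : ContDiff ℝ 1 ξ) (q : ℝ × ℝ)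
    {a b : ℝ} (ha : 0 ≤ a) (hb : 0 ≤ b) :
    a * b * ‖ξ q‖ ≤ (∫ x in Ioc q.1 (q.1 + a) ×ˢ Ioc q.2 (q.2 + b), ‖ξ x‖)
      + ∫ r in Ioc (0 : ℝ) 1, ∫ x in Ioc q.1 (q.1 + a) ×ˢ Ioc q.2 (q.2 + b),
        (a * ‖fderiv ℝ ξ (AffineMap.homothety q r x) (1, 0)‖
          + b * ‖fderiv ℝ ξ (AffineMap.homothety q r x) (0, 1)‖) := by
  set R := Ioc q.1 (q.1 + a) ×ˢ Ioc q.2 (q.2 + b)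
  set Ψ : ℝ × ℝ → ℝ → ℝ := fun x r => a * ‖fderiv ℝ ξ (AffineMap.homothety q r x) (1, 0)‖
    + b * ‖fderiv ℝ ξ (AffineMap.homothety q r x) (0, 1)‖
  have hR : MeasurableSet R := measurableSet_Ioc.prod measurableSet_Ioc
  have hRvol : volume.real R = a * b := by
    simp [R, Measure.volume_eq_prod, measureReal_prod_prod, ha, hb]
  have hD : Continuous (fderiv ℝ ξ) := hξ.continuous_fderiv one_ne_zero
  have hΦ : Continuous fun z : (ℝ × ℝ) × ℝ => AffineMap.homothety q z.2 z.1 := by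
    simp only [AffineMap.homothety_apply, vsub_eq_sub, vadd_eq_add]
    fun_prop
  have hΨc : Continuous (Function.uncurry Ψ) :=
    (((hD.comp hΦ).clm_apply continuous_const).norm.const_mul a).add
      (((hD.comp hΦ).clm_apply continuous_const).norm.const_mul b)
  have hΨ : Integrable (Function.uncurry Ψ)
      ((volume.restrict R).prod (volume.restrict (Ioc 0 1))) := by
    rw [Measure.prod_restrict, ← Measure.volume_eq_prod]
    have hK : IntegrableOn (Function.uncurry Ψ)
        ((Icc q.1 (q.1 + a) ×ˢ Icc q.2 (q.2 + b)) ×ˢ Icc 0 1) :=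
      hΨc.continuousOn.integrableOn_compact ((isCompact_Icc.prod isCompact_Icc).prod isCompact_Icc)
    exact hK.mono_set (prod_mono (prod_mono Ioc_subset_Icc_self Ioc_subset_Icc_self)
      Ioc_subset_Icc_self)
  have hξR : IntegrableOn (fun x => ‖ξ x‖) R := hξ.continuous.norm.integrableOn_Ioc_prod_Ioc _ _ _ _
  have hconst : IntegrableOn (fun _ => ‖ξ q‖) R := integrableOn_const <| by
    simp [R, Measure.volume_eq_prod, Measure.prod_prod, ENNReal.mul_eq_top]
  have havg := setIntegral_mono_on hconst (hξR.add hΨ.integral_prod_left) hR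
    fun x hx => norm_le_norm_add_integral_partialDeriv hξ hx
  rw [setIntegral_const, hRvol, smul_eq_mul, integral_add' hξR hΨ.integral_prod_left] at havg
  exact havg.trans_eq (congrArg _ (integral_integral_swap hΨ))

theorem norm_le_anisotropic_sobolev (hξ : ContDiff ℝ 1 ξ) (hper : ∀ s t, ξ (s, t + 1) = ξ (s, t))
    {T : ℝ} (hT : ∀ x : ℝ × ℝ, T < |x.1| → ξ x = 0) {p : ℝ} (hp : 2 < p) {a b : ℝ}
    (ha : 0 < a) (hb₀ : 0 < b) (hb₁ : b ≤ 1) (q : ℝ × ℝ) :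
    ‖ξ q‖ ≤ (1 + (1 - 2 / p)⁻¹) * (a * b) ^ (-1 / p) *
      ((∫ x in univ ×ˢ Ioc (0 : ℝ) 1, ‖ξ x‖ ^ p) ^ (1 / p)
        + b * (∫ x in univ ×ˢ Ioc (0 : ℝ) 1, ‖fderiv ℝ ξ x (0, 1)‖ ^ p) ^ (1 / p)
        + a * (∫ x in univ ×ˢ Ioc (0 : ℝ) 1, ‖fderiv ℝ ξ x (1, 0)‖ ^ p) ^ (1 / p)) := by
  set R := Ioc q.1 (q.1 + a) ×ˢ Ioc q.2 (q.2 + b)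
  set N₀ := (∫ x in univ ×ˢ Ioc (0 : ℝ) 1, ‖ξ x‖ ^ p) ^ (1 / p)
  set Nₜ := (∫ x in univ ×ˢ Ioc (0 : ℝ) 1, ‖fderiv ℝ ξ x (0, 1)‖ ^ p) ^ (1 / p)
  set Nₛ := (∫ x in univ ×ˢ Ioc (0 : ℝ) 1, ‖fderiv ℝ ξ x (1, 0)‖ ^ p) ^ (1 / p)
  set K := (1 - 2 / p)⁻¹
  have hp₁ : 1 < p := by linarith
  have h2p : 2 / p < 1 := (div_lt_one (by linarith)).2 hp
  have hK : 0 < K := inv_pos.2 (by linarith)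
  have hab : 0 < a * b := mul_pos ha hb₀
  have hDcont (v : ℝ × ℝ) : Continuous fun x => fderiv ℝ ξ x v :=
    (hξ.continuous_fderiv one_ne_zero).clm_apply continuous_const
  have hDper (v : ℝ × ℝ) (s t : ℝ) : fderiv ℝ ξ (s, t + 1) v = fderiv ℝ ξ (s, t) v := by
    have hshift : Function.Periodic ξ (0, 1) := fun ⟨s, t⟩ => by simpa using hper s t
    rw [← hshift.fderiv (s, t), Prod.mk_add_mk, add_zero]
  have hDT (v x : ℝ × ℝ) (hx : T < |x.1|) : fderiv ℝ ξ x v = 0 := by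
    rw [fderiv_eq_zero_of_eqOn_zero (U := {x : ℝ × ℝ | T < |x.1|})
      (isOpen_lt continuous_const (continuous_abs.comp continuous_fst)) (fun y hy => hT y hy) hx,
      zero_apply]
  have hξR : ∫ x in R, ‖ξ x‖ ≤ (a * b) ^ (1 - 1 / p) * N₀ := by
    simpa only [AffineMap.homothety_one, AffineMap.id_apply, Real.one_rpow, mul_one]
      using setIntegral_norm_comp_homothety_le hξ.continuous hT hper hp₁ q ha.le hb₀.le hb₁
        one_pos le_rfl
  have hDR : ∀ r ∈ Ioc (0 : ℝ) 1, ∫ x in R, (a * ‖fderiv ℝ ξ (AffineMap.homothety q r x) (1, 0)‖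
      + b * ‖fderiv ℝ ξ (AffineMap.homothety q r x) (0, 1)‖)
        ≤ (a * b) ^ (1 - 1 / p) * (a * Nₛ + b * Nₜ) * r ^ (-(2 / p)) := by
    rintro r ⟨hr₀, hr₁⟩
    have hbound (v : ℝ × ℝ) := setIntegral_norm_comp_homothety_le (hDcont v) (hDT v) (hDper v)
      hp₁ q ha.le hb₀.le hb₁ hr₀ hr₁
    have hint (v : ℝ × ℝ) :
        IntegrableOn (fun x => ‖fderiv ℝ ξ (AffineMap.homothety q r x) v‖) R :=
      ((hDcont v).comp (AffineMap.homothety_continuous q r)).norm.integrableOn_Ioc_prod_Ioc _ _ _ _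
    rw [integral_add ((hint _).const_mul a) ((hint _).const_mul b), integral_const_mul,
      integral_const_mul]
    nlinarith [hbound (1, 0), hbound (0, 1)]
  have hweight : ∫ r in Ioc (0 : ℝ) 1, r ^ (-(2 / p)) = K := by
    rw [← intervalIntegral.integral_of_le zero_le_one, integral_rpow (by left; linarith),
      Real.one_rpow, Real.zero_rpow (by linarith), sub_zero, one_div, neg_add_eq_sub]
  have hDRr : ∫ r in Ioc (0 : ℝ) 1, ∫ x in R,
      (a * ‖fderiv ℝ ξ (AffineMap.homothety q r x) (1, 0)‖
        + b * ‖fderiv ℝ ξ (AffineMap.homothety q r x) (0, 1)‖)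
      ≤ (a * b) ^ (1 - 1 / p) * (a * Nₛ + b * Nₜ) * K := by
    rw [← hweight, ← integral_const_mul]
    refine integral_mono_of_nonneg (.of_forall fun r => setIntegral_nonneg
      (measurableSet_Ioc.prod measurableSet_Ioc) fun x _ => by positivity) ?_
      ((ae_restrict_iff' measurableSet_Ioc).2 (.of_forall hDR))
    exact ((intervalIntegral.intervalIntegrable_rpow' (by linarith)).1).const_mul _
  have hpow : (a * b) ^ (1 - 1 / p) = a * b * (a * b) ^ (-1 / p) := by
    rw [show 1 - 1 / p = 1 + -1 / p by ring, Real.rpow_add hab, Real.rpow_one]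
  rw [hpow] at hξR hDRr
  refine le_of_mul_le_mul_left (((mul_norm_le_setIntegral_add_integral_setIntegral hξ q ha.le
    hb₀.le).trans (add_le_add hξR hDRr)).trans ?_) hab
  have hN₀ : 0 ≤ N₀ := by positivity
  have hNₜ : 0 ≤ b * Nₜ := by positivity
  have hNₛ : 0 ≤ a * Nₛ := by positivity
  calc _ = a * b * (a * b) ^ (-1 / p) * (N₀ + K * (b * Nₜ + a * Nₛ)) := by ring
    _ ≤ a * b * (a * b) ^ (-1 / p) * ((1 + K) * (N₀ + b * Nₜ + a * Nₛ)) := by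
      gcongr
      nlinarith [mul_nonneg hK.le hN₀]
    _ = _ := by ring

end Rectangle

theorem statement12_general (p : ℝ) (hp : 2 < p) (n : ℕ) :
    ∃ c : ℝ, 0 < c ∧
      ∀ ε ∈ Set.Ioc (0 : ℝ) 1, ∀ β₁ : ℝ, 0 ≤ β₁ → ∀ β₂ : ℝ, 0 ≤ β₂ →
      ∀ ξ : ℝ × ℝ → EuclideanSpace ℝ (Fin n),
        ContDiff ℝ 1 ξ →
        (∀ s t : ℝ, ξ (s, t + 1) = ξ (s, t)) →
        (∃ T : ℝ, ∀ q : ℝ × ℝ, T < |q.1| → ξ q = 0) →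
        ∀ q : ℝ × ℝ,
          ‖ξ q‖ ≤ c * ε ^ (-(β₁ + β₂) / p) *
            (cylNorm p ξ + ε ^ β₁ * cylNorm p (fun x => fderiv ℝ ξ x (0, 1)) +
              ε ^ β₂ * cylNorm p (fun x => fderiv ℝ ξ x (1, 0))) := by
  have h2p : 2 / p < 1 := (div_lt_one (by linarith)).2 hp
  refine ⟨1 + (1 - 2 / p)⁻¹, by have := inv_pos.2 (sub_pos.2 h2p); positivity, ?_⟩
  rintro ε ⟨hε₀, hε₁⟩ β₁ hβ₁ β₂ - ξ hξ hper ⟨T, hT⟩ q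
  have hweight : (ε ^ β₂ * ε ^ β₁) ^ (-1 / p) = ε ^ (-(β₁ + β₂) / p) := by
    rw [← Real.rpow_add hε₀, ← Real.rpow_mul hε₀.le]
    ring_nf
  have h := norm_le_anisotropic_sobolev hξ hper hT hp (Real.rpow_pos_of_pos hε₀ β₂)
    (Real.rpow_pos_of_pos hε₀ β₁) (Real.rpow_le_one hε₀.le hε₁ hβ₁) q
  rwa [hweight] at h

/-- Anisotropic Sobolev inequality with `ε`-weights on the cylinder: for `p > 2` there is a
constant `c > 0` such that for all `ε ∈ (0,1]`, all `β₁, β₂ ≥ 0`, and every `C¹` function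
`ξ : ℝ² → ℝⁿ` that is `1`-periodic in `t` and vanishes outside a set `[−T,T] × ℝ`,
`sup |ξ| ≤ c ε^{−(β₁+β₂)/p} (‖ξ‖_p + ε^{β₁} ‖∂ₜξ‖_p + ε^{β₂} ‖∂ₛξ‖_p)`
(stated pointwise, which is equivalent). -/
theorem statement12 (p : ℝ) (hp : 2 < p) (n : ℕ) (hn : 0 < n) :
    ∃ c : ℝ, 0 < c ∧
      ∀ ε ∈ Set.Ioc (0 : ℝ) 1, ∀ β₁ : ℝ, 0 ≤ β₁ → ∀ β₂ : ℝ, 0 ≤ β₂ →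
      ∀ ξ : ℝ × ℝ → EuclideanSpace ℝ (Fin n),
        ContDiff ℝ 1 ξ →
        (∀ s t : ℝ, ξ (s, t + 1) = ξ (s, t)) →
        (∃ T : ℝ, ∀ q : ℝ × ℝ, T < |q.1| → ξ q = 0) →
        ∀ q : ℝ × ℝ,
          ‖ξ q‖ ≤ c * ε ^ (-(β₁ + β₂) / p) *
            (cylNorm p ξ + ε ^ β₁ * cylNorm p (fun x => fderiv ℝ ξ x (0, 1)) +
              ε ^ β₂ * cylNorm p (fun x => fderiv ℝ ξ x (1, 0))) :=
  statement12_general p hp n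
end

section
/- Define m : ℝ² ∖ {(0,0)} → ℂ by m(σ,τ) := iσ/(τ² + iσ). Then m is smooth, its partial derivatives are given by ∂_σ m = iτ²/(τ² + iσ)², ∂_τ m = −2iστ/(τ² + iσ)², and ∂_σ ∂_τ m = −2iτ(τ² − iσ)/(τ² + iσ)³, and there exists a constant c > 0 such that |m(σ,τ)| + |σ ∂_σ m(σ,τ)| + |τ ∂_τ m(σ,τ)| + |σ τ ∂_σ ∂_τ m(σ,τ)| ≤ c for all (σ,τ) ∈ ℝ² ∖ {(0,0)}. -/
open Complex

/-- The multiplier `m(σ,τ) = iσ/(τ² + iσ)` of the heat operator `∂ₛ − ∂ₜ∂ₜ`. -/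
noncomputable def mHeat (q : ℝ × ℝ) : ℂ :=
  (Complex.I * (q.1 : ℂ)) / ((q.2 : ℂ) ^ 2 + Complex.I * (q.1 : ℂ))

/-! Write `D = τ² + iσ`. Then `|σ| = |Im D| ≤ |D|`, `τ² = Re D ≤ |D|` and
`|τ² − iσ| = |conj D| = |D|`, so `|m| ≤ 1` and each of the three derivative terms is at most
twice `|σ|τ²/|D|² ≤ 1`. Since `m` is smooth off the origin, its partial derivatives are the
derivatives of its restrictions to coordinate lines, which are one-variable rational functions. -/

section PartialDerivatives

variable {𝕜 F : Type*} [NontriviallyNormedField 𝕜] [NormedAddCommGroup F] [NormedSpace 𝕜 F]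
  {f : 𝕜 × 𝕜 → F} {q : 𝕜 × 𝕜} {a : F}

theorem DifferentiableAt.fderiv_apply_one_zero (hf : DifferentiableAt 𝕜 f q)
    (h : HasDerivAt (fun s => f (s, q.2)) a q.1) : fderiv 𝕜 f q (1, 0) = a := by
  have := (hf.hasFDerivAt.comp q.1 (hasFDerivAt_prodMk_left q.1 q.2)).hasDerivAt
  exact this.unique h

theorem DifferentiableAt.fderiv_apply_zero_one (hf : DifferentiableAt 𝕜 f q)
    (h : HasDerivAt (fun t => f (q.1, t)) a q.2) : fderiv 𝕜 f q (0, 1) = a := by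
  have := (hf.hasFDerivAt.comp q.2 (hasFDerivAt_prodMk_right q.1 q.2)).hasDerivAt
  exact this.unique h

end PartialDerivatives

section HeatSymbol

variable {σ τ : ℝ}

theorem heat_denom_ne_zero {q : ℝ × ℝ} (hq : q ≠ 0) : (q.2 : ℂ) ^ 2 + I * q.1 ≠ 0 := by
  intro h
  have hre : q.2 = 0 := by simpa [← ofReal_pow] using congrArg re h
  have him : q.1 = 0 := by simpa [← ofReal_pow] using congrArg im h
  exact hq (Prod.ext him hre)

theorem abs_le_norm_heat_denom : |σ| ≤ ‖(τ : ℂ) ^ 2 + I * σ‖ := by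
  have h := abs_im_le_norm ((τ : ℂ) ^ 2 + I * σ)
  rw [← ofReal_pow, add_im, ofReal_im, I_mul_im, ofReal_re, zero_add] at h
  exact_mod_cast h

theorem sq_le_norm_heat_denom : τ ^ 2 ≤ ‖(τ : ℂ) ^ 2 + I * σ‖ := by
  have h := re_le_norm ((τ : ℂ) ^ 2 + I * σ)
  rw [← ofReal_pow, add_re, ofReal_re, I_mul_re, ofReal_im, neg_zero, add_zero] at h
  exact_mod_cast h

theorem norm_heat_denom_conj : ‖(τ : ℂ) ^ 2 - I * σ‖ = ‖(τ : ℂ) ^ 2 + I * σ‖ := by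
  rw [← RCLike.norm_conj ((τ : ℂ) ^ 2 + I * σ)]
  simp [sub_eq_add_neg]

theorem hasDerivAt_heat_fst (h : (τ : ℂ) ^ 2 + I * σ ≠ 0) :
    HasDerivAt (fun s : ℝ => I * s / ((τ : ℂ) ^ 2 + I * s))
      (I * τ ^ 2 / ((τ : ℂ) ^ 2 + I * σ) ^ 2) σ := by
  have hs : HasDerivAt (fun s : ℝ => I * s) I σ := by
    simpa using (hasDerivAt_id σ).ofReal_comp.const_mul I
  exact (hs.fun_div (hs.const_add _) h).congr_deriv (by ring)

theorem hasDerivAt_heat_snd (h : (τ : ℂ) ^ 2 + I * σ ≠ 0) :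
    HasDerivAt (fun t : ℝ => I * σ / ((t : ℂ) ^ 2 + I * σ))
      (-2 * I * σ * τ / ((τ : ℂ) ^ 2 + I * σ) ^ 2) τ := by
  have ht : HasDerivAt (fun t : ℝ => (t : ℂ) ^ 2 + I * σ) (2 * τ) τ := by
    simpa using ((hasDerivAt_id τ).ofReal_comp.pow 2).add_const (I * σ)
  exact ((hasDerivAt_const τ (I * σ)).fun_div ht h).congr_deriv (by ring)

theorem hasDerivAt_heat_snd_fst (h : (τ : ℂ) ^ 2 + I * σ ≠ 0) :
    HasDerivAt (fun s : ℝ => -2 * I * s * τ / ((τ : ℂ) ^ 2 + I * s) ^ 2)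
      (-2 * I * τ * ((τ : ℂ) ^ 2 - I * σ) / ((τ : ℂ) ^ 2 + I * σ) ^ 3) σ := by
  have hs : HasDerivAt (fun s : ℝ => (s : ℂ)) 1 σ := (hasDerivAt_id σ).ofReal_comp
  refine (((hs.const_mul (-2 * I)).mul_const (τ : ℂ)).fun_div
    (((hs.const_mul I).const_add ((τ : ℂ) ^ 2)).fun_pow 2) (pow_ne_zero 2 h)).congr_deriv ?_
  field_simp
  ring

end HeatSymbol

theorem contDiffOn_mHeat : ContDiffOn ℝ (⊤ : ℕ∞) mHeat {q : ℝ × ℝ | q ≠ 0} := by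
  have hnum : ContDiff ℝ (⊤ : ℕ∞) (fun q : ℝ × ℝ => I * (q.1 : ℂ)) :=
    contDiff_const.mul (ofRealCLM.contDiff.comp contDiff_fst)
  have hden : ContDiff ℝ (⊤ : ℕ∞) (fun q : ℝ × ℝ => (q.2 : ℂ) ^ 2 + I * q.1) :=
    ((ofRealCLM.contDiff.comp contDiff_snd).pow 2).add hnum
  exact (hnum.contDiffOn.mul (hden.contDiffOn.inv fun q hq => heat_denom_ne_zero hq)).congr
    fun q _ => div_eq_mul_inv _ _

theorem differentiableAt_mHeat {q : ℝ × ℝ} (hq : q ≠ 0) : DifferentiableAt ℝ mHeat q :=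
  (contDiffOn_mHeat.contDiffAt (isOpen_ne.mem_nhds hq)).differentiableAt (by simp)

theorem fderiv_mHeat_apply_one_zero {q : ℝ × ℝ} (hq : q ≠ 0) :
    fderiv ℝ mHeat q (1, 0) =
      I * (q.2 : ℂ) ^ 2 / ((q.2 : ℂ) ^ 2 + I * (q.1 : ℂ)) ^ 2 :=
  (differentiableAt_mHeat hq).fderiv_apply_one_zero (hasDerivAt_heat_fst (heat_denom_ne_zero hq))

theorem fderiv_mHeat_apply_zero_one {q : ℝ × ℝ} (hq : q ≠ 0) :
    fderiv ℝ mHeat q (0, 1) =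
      -2 * I * (q.1 : ℂ) * (q.2 : ℂ) / ((q.2 : ℂ) ^ 2 + I * (q.1 : ℂ)) ^ 2 :=
  (differentiableAt_mHeat hq).fderiv_apply_zero_one (hasDerivAt_heat_snd (heat_denom_ne_zero hq))

theorem fderiv_fderiv_mHeat_apply {q : ℝ × ℝ} (hq : q ≠ 0) :
    fderiv ℝ (fun x => fderiv ℝ mHeat x (0, 1)) q (1, 0) =
      -2 * I * (q.2 : ℂ) * ((q.2 : ℂ) ^ 2 - I * (q.1 : ℂ)) /
        ((q.2 : ℂ) ^ 2 + I * (q.1 : ℂ)) ^ 3 := by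
  have hsmooth : ContDiffOn ℝ 1 (fun x => fderiv ℝ mHeat x (0, 1)) {x : ℝ × ℝ | x ≠ 0} :=
    (contDiffOn_mHeat.fderiv_of_isOpen isOpen_ne (WithTop.coe_le_coe.mpr le_top)).clm_apply
      contDiffOn_const
  have hdiff : DifferentiableAt ℝ (fun x => fderiv ℝ mHeat x (0, 1)) q :=
    (hsmooth.contDiffAt (isOpen_ne.mem_nhds hq)).differentiableAt one_ne_zero
  have hnear : ∀ᶠ s in nhds q.1, ((s, q.2) : ℝ × ℝ) ≠ 0 :=
    (continuous_id.prodMk continuous_const).continuousAt.preimage_mem_nhds (isOpen_ne.mem_nhds hq)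
  exact hdiff.fderiv_apply_one_zero <|
    (hasDerivAt_heat_snd_fst (heat_denom_ne_zero hq)).congr_of_eventuallyEq
      (hnear.mono fun s hs => fderiv_mHeat_apply_zero_one hs)

theorem heat_mihlin_bound {q : ℝ × ℝ} (hq : q ≠ 0) :
    ‖mHeat q‖ + ‖(q.1 : ℂ) * fderiv ℝ mHeat q (1, 0)‖ +
      ‖(q.2 : ℂ) * fderiv ℝ mHeat q (0, 1)‖ +
      ‖(q.1 : ℂ) * (q.2 : ℂ) * fderiv ℝ (fun x => fderiv ℝ mHeat x (0, 1)) q (1, 0)‖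
        ≤ 6 := by
  rw [fderiv_mHeat_apply_one_zero hq, fderiv_mHeat_apply_zero_one hq, fderiv_fderiv_mHeat_apply hq,
    mHeat]
  simp only [norm_div, norm_mul, norm_pow, norm_neg, norm_I, norm_real, Real.norm_eq_abs,
    norm_ofNat, mul_one, norm_heat_denom_conj]
  set d := ‖(q.2 : ℂ) ^ 2 + I * q.1‖
  have hd : 0 < d := norm_pos_iff.mpr (heat_denom_ne_zero hq)
  have hσ : |q.1| ≤ d := abs_le_norm_heat_denom
  have hτ : |q.2| ^ 2 ≤ d := (sq_abs q.2).trans_le sq_le_norm_heat_denom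
  have hστ : |q.1| * |q.2| ^ 2 / d ^ 2 ≤ 1 := by
    rw [div_le_one (by positivity), sq d]
    exact mul_le_mul hσ hτ (by positivity) hd.le
  calc _ = |q.1| / d + 5 * (|q.1| * |q.2| ^ 2 / d ^ 2) := by field_simp; ring
    _ ≤ 1 + 5 * 1 := by gcongr; exact (div_le_one hd).2 hσ
    _ = 6 := by norm_num

/-- The multiplier `m(σ,τ) = iσ/(τ² + iσ)` is smooth on `ℝ² ∖ {0}`, its partial derivatives
are given by the displayed formulas, and it satisfies the Marcinkiewicz–Mihlin bound
`|m| + |σ ∂_σ m| + |τ ∂_τ m| + |στ ∂_σ∂_τ m| ≤ c` on `ℝ² ∖ {0}`. -/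
theorem statement13 :
    ContDiffOn ℝ (⊤ : ℕ∞) mHeat {q : ℝ × ℝ | q ≠ 0} ∧
    (∀ q : ℝ × ℝ, q ≠ 0 →
      fderiv ℝ mHeat q (1, 0) =
        Complex.I * (q.2 : ℂ) ^ 2 / ((q.2 : ℂ) ^ 2 + Complex.I * (q.1 : ℂ)) ^ 2) ∧
    (∀ q : ℝ × ℝ, q ≠ 0 →
      fderiv ℝ mHeat q (0, 1) =
        -2 * Complex.I * (q.1 : ℂ) * (q.2 : ℂ) /
          ((q.2 : ℂ) ^ 2 + Complex.I * (q.1 : ℂ)) ^ 2) ∧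
    (∀ q : ℝ × ℝ, q ≠ 0 →
      fderiv ℝ (fun x => fderiv ℝ mHeat x (0, 1)) q (1, 0) =
        -2 * Complex.I * (q.2 : ℂ) * ((q.2 : ℂ) ^ 2 - Complex.I * (q.1 : ℂ)) /
          ((q.2 : ℂ) ^ 2 + Complex.I * (q.1 : ℂ)) ^ 3) ∧
    (∃ c : ℝ, 0 < c ∧ ∀ q : ℝ × ℝ, q ≠ 0 →
      ‖mHeat q‖ + ‖(q.1 : ℂ) * fderiv ℝ mHeat q (1, 0)‖ +
        ‖(q.2 : ℂ) * fderiv ℝ mHeat q (0, 1)‖ +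
        ‖(q.1 : ℂ) * (q.2 : ℂ) * fderiv ℝ (fun x => fderiv ℝ mHeat x (0, 1)) q (1, 0)‖
        ≤ c) :=
  ⟨contDiffOn_mHeat, fun _ => fderiv_mHeat_apply_one_zero, fun _ => fderiv_mHeat_apply_zero_one,
    fun _ => fderiv_fderiv_mHeat_apply, 6, by norm_num, fun _ => heat_mihlin_bound⟩
end
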